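/- Let (ξ_n)_{n≥1} be i.i.d. EXP(1), (α_n)_{n≥1} i.i.d. with density (1/4)sin(x/2) on [0,2π], all independent; set ν_n := ⌊ξ_n/(2π)⌋ and ζ_n := ξ_n - 2πν_n. Define the Markov chain (ζ_n, θ_n) on [0,2π) × [0,2π) by θ_{n+1} := θ_n + ζ_n/2 + (ν_{n+1}+1)α_{n+1} + ζ_{n+1}/2 (mod 2π). Then the product measure in which ζ ~ TRUNCEXP(1, 2π) and θ ~ UNI[0, 2π) are independent is a stationary distribution for this Markov chain. -/

import Mathlib

/-!
The new angle is `θ' = θ + c (mod 2π)`, where the rotation `c` is a measurable function of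
`(ζ, ξ', α')`, a vector independent of `θ`. Since the uniform law on `[0, 2π)` is invariant under
every rotation mod `2π`, the law of `(ζ', θ')` is the skew product `law(ζ') ⊗ UNI[0, 2π)`.
Finally `ζ' = ξ' mod 2π`, and folding `EXP(1)` modulo `2π` adds up the densities
`e^{-(y + 2πn)}`, `n ≥ 0`, to `e^{-y} / (1 - e^{-2π})` on `[0, 2π)`. Both facts about reduction
mod `p` rest on the unfolding identity
`∫_{(x mod p) ∈ s} f = ∫_{s ∩ [a, a + p)} ∑_{n ∈ ℤ} f (y + n p)`.
-/

open MeasureTheory ProbabilityTheory Real Set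
open scoped ENNReal

/-- TRUNCEXP(1, L): density e^{-x}/(1-e^{-L}) on [0,L]. -/
noncomputable def truncExpMeasure (L : ℝ) : Measure ℝ :=
  volume.withDensity fun x =>
    ENNReal.ofReal (if x ∈ Icc 0 L then Real.exp (-x) / (1 - Real.exp (-L)) else 0)

/-- The uniform distribution on [0, 2π). -/
noncomputable def uniMeasure : Measure ℝ :=
  (ENNReal.ofReal (2 * π))⁻¹ • volume.restrict (Ico 0 (2 * π))

/-- The scattering-angle distribution: density (1/4)·sin(x/2) on [0, 2π]. -/
noncomputable def sinHalfMeasure : Measure ℝ :=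
  volume.withDensity fun x =>
    ENNReal.ofReal (if x ∈ Icc 0 (2 * π) then (1 / 4) * Real.sin (x / 2) else 0)

/-- Reduction modulo 2π to [0, 2π). -/
noncomputable def mod2pi (x : ℝ) : ℝ := x - 2 * π * ⌊x / (2 * π)⌋

theorem tsum_indicator_Ico_add_zsmul {p : ℝ} (hp : 0 < p) (b y : ℝ) :
    ∑' n : ℤ, (Ico b (b + p)).indicator (1 : ℝ → ℝ≥0∞) (y + n • p) = 1 := by
  obtain ⟨m, hm, huniq⟩ := existsUnique_add_zsmul_mem_Ico hp y b
  rw [tsum_eq_single m fun n hn => indicator_of_notMem (fun h => hn (huniq n h)) _,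
    indicator_of_mem hm, Pi.one_apply]

section Periodization

variable {p : ℝ} (hp : 0 < p)

theorem measurable_toIcoMod (a : ℝ) : Measurable (toIcoMod hp a) := by
  simp_rw [funext (toIcoMod_eq_add_fract_mul hp a)]
  exact measurable_const.add
    ((measurable_fract.comp ((measurable_id.sub_const a).div_const p)).mul_const p)

theorem lintegral_preimage_toIcoMod (a : ℝ) {f : ℝ → ℝ≥0∞} (hf : Measurable f) {s : Set ℝ}
    (hs : MeasurableSet s) :
    ∫⁻ x in toIcoMod hp a ⁻¹' s, f x = ∫⁻ y in s ∩ Ico a (a + p), ∑' n : ℤ, f (y + n • p) := by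
  set A := toIcoMod hp a ⁻¹' s
  have hA : MeasurableSet A := measurable_toIcoMod hp a hs
  have hpiece (n : ℤ) :
      (· + n • p) ⁻¹' (A ∩ Ico (a + n • p) (a + (n + 1) • p)) = s ∩ Ico a (a + p) := by
    ext y
    simp only [A, mem_preimage, mem_inter_iff, toIcoMod_add_zsmul, mem_Ico, add_smul, one_smul]
    constructor
    · rintro ⟨hy, h1, h2⟩
      have hy' : y ∈ Ico a (a + p) := ⟨by linarith, by linarith⟩
      rw [(toIcoMod_eq_self hp).2 hy'] at hy
      exact ⟨hy, hy'⟩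
    · rintro ⟨hy, h1, h2⟩
      rw [← (toIcoMod_eq_self hp).2 ⟨h1, h2⟩] at hy
      exact ⟨hy, by linarith, by linarith⟩
  calc ∫⁻ x in A, f x = ∑' n : ℤ, ∫⁻ x in A ∩ Ico (a + n • p) (a + (n + 1) • p), f x := by
        conv_lhs => rw [← inter_univ A, ← iUnion_Ico_add_zsmul hp a, inter_iUnion]
        exact lintegral_iUnion (fun n => hA.inter measurableSet_Ico)
          ((pairwise_disjoint_Ico_add_zsmul a p).mono fun _ _ h =>
            h.mono inter_subset_right inter_subset_right) f
    _ = ∑' n : ℤ, ∫⁻ y in s ∩ Ico a (a + p), f (y + n • p) := by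
        refine tsum_congr fun n => ?_
        rw [← hpiece n, (measurePreserving_add_right volume (n • p)).setLIntegral_comp_preimage_emb
          (measurableEmbedding_addRight _)]
    _ = _ := (lintegral_tsum fun n => (hf.comp (measurable_add_const _)).aemeasurable).symm

theorem map_toIcoMod_add_volume_restrict (a c : ℝ) :
    (volume.restrict (Ico a (a + p))).map (fun x => toIcoMod hp a (x + c))
      = volume.restrict (Ico a (a + p)) := by
  ext s hs
  have hA : MeasurableSet (toIcoMod hp a ⁻¹' s) := measurable_toIcoMod hp a hs
  have hpre : (fun x => toIcoMod hp a (x + c)) ⁻¹' s ∩ Ico a (a + p)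
      = (· + c) ⁻¹' (Ico (a + c) (a + c + p) ∩ toIcoMod hp a ⁻¹' s) := by
    ext x
    simp only [mem_inter_iff, mem_preimage, mem_Ico]
    constructor
    · rintro ⟨hx, h1, h2⟩
      exact ⟨⟨by linarith, by linarith⟩, hx⟩
    · rintro ⟨⟨h1, h2⟩, hx⟩
      exact ⟨hx, by linarith, by linarith⟩
  have hm : Measurable fun x => toIcoMod hp a (x + c) :=
    (measurable_toIcoMod hp a).comp (measurable_add_const c)
  rw [Measure.map_apply hm hs,
    Measure.restrict_apply' measurableSet_Ico, Measure.restrict_apply' measurableSet_Ico, hpre,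
    measure_preimage_add_right, ← Measure.restrict_apply' hA,
    ← lintegral_indicator_one measurableSet_Ico,
    lintegral_preimage_toIcoMod hp a (measurable_one.indicator measurableSet_Ico) hs]
  simp only [tsum_indicator_Ico_add_zsmul hp, setLIntegral_one]

end Periodization

section TruncatedExponential

variable {p : ℝ}

theorem tsum_exponentialPDF_add_zsmul {y : ℝ} (hy : y ∈ Ico 0 p) :
    ∑' n : ℤ, exponentialPDF 1 (y + n • p)
      = ENNReal.ofReal (exp (-y)) * (1 - ENNReal.ofReal (exp (-p)))⁻¹ := by
  have hp : 0 ≤ p := hy.1.trans hy.2.le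
  have hneg (n : ℕ) : exponentialPDF 1 (y + (-(n + 1) : ℤ) • p) = 0 := by
    refine exponentialPDF_of_neg ?_
    have : 0 ≤ n * p := by positivity
    simp only [zsmul_eq_mul]
    push_cast
    linarith [hy.2]
  have hnonneg (n : ℕ) : exponentialPDF 1 (y + (n : ℤ) • p)
      = ENNReal.ofReal (exp (-y)) * ENNReal.ofReal (exp (-p)) ^ n := by
    rw [exponentialPDF_of_nonneg (add_nonneg hy.1 (by positivity)),
      ← ENNReal.ofReal_pow (exp_nonneg _), ← ENNReal.ofReal_mul (exp_nonneg _), ← exp_nat_mul,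
      ← exp_add, natCast_zsmul, nsmul_eq_mul]
    ring_nf
  rw [tsum_of_nat_of_neg_add_one ENNReal.summable ENNReal.summable]
  simp only [hneg, hnonneg, tsum_zero, add_zero, ENNReal.tsum_mul_left, ENNReal.tsum_geometric]

theorem truncExpMeasure_apply (hp : 0 < p) {s : Set ℝ} (hs : MeasurableSet s) :
    truncExpMeasure p s
      = ∫⁻ y in s ∩ Ico 0 p, ENNReal.ofReal (exp (-y)) * (1 - ENNReal.ofReal (exp (-p)))⁻¹ := by
  have hdens (x : ℝ) :
      ENNReal.ofReal (if x ∈ Icc 0 p then exp (-x) / (1 - exp (-p)) else 0)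
        = (Icc 0 p).indicator
            (fun y => ENNReal.ofReal (exp (-y)) * (1 - ENNReal.ofReal (exp (-p)))⁻¹) x := by
    have hpos : 0 < 1 - exp (-p) := sub_pos.2 (exp_lt_one_iff.2 (neg_lt_zero.2 hp))
    by_cases hx : x ∈ Icc 0 p
    · rw [if_pos hx, indicator_of_mem hx, ENNReal.ofReal_div_of_pos hpos, div_eq_mul_inv,
        ENNReal.ofReal_sub _ (exp_nonneg _), ENNReal.ofReal_one]
    · rw [if_neg hx, indicator_of_notMem hx, ENNReal.ofReal_zero]
  rw [truncExpMeasure, withDensity_apply _ hs]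
  simp only [hdens]
  rw [lintegral_indicator measurableSet_Icc, Measure.restrict_restrict measurableSet_Icc,
    inter_comm, Measure.restrict_congr_set (ae_eq_set_inter (ae_eq_refl s) Ico_ae_eq_Icc.symm)]

theorem map_toIcoMod_expMeasure_one (hp : 0 < p) :
    (expMeasure 1).map (toIcoMod hp 0) = truncExpMeasure p := by
  ext s hs
  have hpdf : Measurable (exponentialPDF 1) := (measurable_exponentialPDFReal 1).ennreal_ofReal
  rw [Measure.map_apply (measurable_toIcoMod hp 0) hs, truncExpMeasure_apply hp hs]
  change volume.withDensity (exponentialPDF 1) _ = _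
  rw [withDensity_apply _ (measurable_toIcoMod hp 0 hs), lintegral_preimage_toIcoMod hp 0 hpdf hs,
    zero_add]
  exact setLIntegral_congr_fun (hs.inter measurableSet_Ico) fun y hy =>
    tsum_exponentialPDF_add_zsmul hy.2

end TruncatedExponential

theorem mod2pi_eq_toIcoMod : mod2pi = toIcoMod two_pi_pos 0 := by
  ext x
  rw [toIcoMod_eq_fract_mul, Int.fract, mod2pi]
  field_simp

@[fun_prop]
theorem measurable_mod2pi : Measurable mod2pi :=
  mod2pi_eq_toIcoMod ▸ measurable_toIcoMod two_pi_pos 0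

instance : SFinite uniMeasure := by
  unfold uniMeasure
  infer_instance

theorem map_mod2pi_add_uniMeasure (c : ℝ) :
    uniMeasure.map (fun θ => mod2pi (θ + c)) = uniMeasure := by
  have h := map_toIcoMod_add_volume_restrict two_pi_pos 0 c
  rw [zero_add] at h
  rw [uniMeasure, Measure.map_smul, mod2pi_eq_toIcoMod, h]

theorem map_mod2pi_expMeasure_one : (expMeasure 1).map mod2pi = truncExpMeasure (2 * π) := by
  rw [mod2pi_eq_toIcoMod, map_toIcoMod_expMeasure_one]

theorem ProbabilityTheory.iIndepFun.indepFun_prodMk₃ {Ω ι : Type*} [MeasurableSpace Ω]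
    {μ : Measure Ω} {β : ι → Type*} [∀ i, MeasurableSpace (β i)] {f : (i : ι) → Ω → β i}
    (hf : iIndepFun f μ) (hmeas : ∀ i, Measurable (f i)) {i j k l : ι}
    (hil : i ≠ l) (hjl : j ≠ l) (hkl : k ≠ l) :
    IndepFun (fun ω => (f i ω, f j ω, f k ω)) (f l) μ := by
  classical
  have hST : Disjoint ({i, j, k} : Finset ι) {l} := by simp [hil.symm, hjl.symm, hkl.symm]
  exact (hf.indepFun_finset _ _ hST hmeas).comp
    ((measurable_pi_apply ⟨i, by simp⟩).prodMk
      ((measurable_pi_apply ⟨j, by simp⟩).prodMk (measurable_pi_apply ⟨k, by simp⟩)))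
    (measurable_pi_apply ⟨l, by simp⟩)

theorem map_prodMk_mod2pi_add_of_indepFun {Ω β : Type*} [MeasurableSpace Ω] [MeasurableSpace β]
    {μ : Measure Ω} [IsFiniteMeasure μ] {X : Ω → β} {Θ : Ω → ℝ} (hX : Measurable X)
    (hΘ : Measurable Θ) (hXΘ : IndepFun X Θ μ) (hΘlaw : μ.map Θ = uniMeasure) {g h : β → ℝ}
    (hg : Measurable g) (hh : Measurable h) :
    μ.map (fun ω => (g (X ω), mod2pi (Θ ω + h (X ω)))) = (μ.map (g ∘ X)).prod uniMeasure := by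
  have hjoint : μ.map (fun ω => (X ω, Θ ω)) = (μ.map X).prod uniMeasure := by
    rw [← hΘlaw]
    exact (indepFun_iff_map_prod_eq_prod_map_map hX.aemeasurable hΘ.aemeasurable).1 hXΘ
  have hskew : MeasurePreserving (fun q : β × ℝ => (g q.1, mod2pi (q.2 + h q.1)))
      ((μ.map X).prod uniMeasure) ((μ.map (g ∘ X)).prod uniMeasure) := by
    refine MeasurePreserving.skew_product ⟨hg, Measure.map_map hg hX⟩ ?_
      (ae_of_all _ fun v => map_mod2pi_add_uniMeasure (h v))
    exact measurable_mod2pi.comp (measurable_snd.add (hh.comp measurable_fst))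
  rw [← hskew.map_eq, ← hjoint, Measure.map_map hskew.measurable (hX.prodMk hΘ)]
  rfl

theorem stmt3_general
    {Ω : Type*} [MeasureSpace Ω] [IsProbabilityMeasure (ℙ : Measure Ω)]
    (Z Θ Ξ A : Ω → ℝ)
    (hZm : Measurable Z) (hΘm : Measurable Θ) (hΞm : Measurable Ξ) (hAm : Measurable A)
    (hindep : iIndepFun ![Z, Θ, Ξ, A] ℙ)
    (hΘ : Measure.map Θ ℙ = uniMeasure)
    (hΞ : Measure.map Ξ ℙ = ProbabilityTheory.expMeasure 1)
    (ν : Ω → ℤ) (hν : ∀ ω, ν ω = ⌊Ξ ω / (2 * π)⌋)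
    (ζ' : Ω → ℝ) (hζ' : ∀ ω, ζ' ω = Ξ ω - 2 * π * (ν ω))
    (θ' : Ω → ℝ)
    (hθ' : ∀ ω, θ' ω = mod2pi (Θ ω + Z ω / 2 + ((ν ω : ℝ) + 1) * A ω + ζ' ω / 2)) :
    Measure.map (fun ω => (ζ' ω, θ' ω)) ℙ = (truncExpMeasure (2 * π)).prod uniMeasure := by
  set X : Ω → ℝ × ℝ × ℝ := fun ω => (Z ω, Ξ ω, A ω)
  set rotation : ℝ × ℝ × ℝ → ℝ := fun v =>
    v.1 / 2 + ((⌊v.2.1 / (2 * π)⌋ : ℝ) + 1) * v.2.2 + mod2pi v.2.1 / 2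
  have hζ'_eq (ω : Ω) : ζ' ω = mod2pi (Ξ ω) := by rw [hζ', hν, mod2pi]
  have hpair : (fun ω => (ζ' ω, θ' ω))
      = fun ω => ((fun v : ℝ × ℝ × ℝ => mod2pi v.2.1) (X ω), mod2pi (Θ ω + rotation (X ω))) := by
    ext ω
    · exact hζ'_eq ω
    · change θ' ω = mod2pi (Θ ω + rotation (X ω))
      rw [hθ', hζ'_eq, hν]
      simp only [rotation, X]
      congr 1
      ring
  have hXΘ : IndepFun X Θ ℙ :=
    hindep.indepFun_prodMk₃ (i := 0) (j := 2) (k := 3) (l := 1)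
      (fun i => by fin_cases i <;> assumption) (by decide) (by decide) (by decide)
  have hrotation : Measurable rotation := by fun_prop
  rw [hpair, map_prodMk_mod2pi_add_of_indepFun (hZm.prodMk (hΞm.prodMk hAm)) hΘm hXΘ hΘ
    (g := fun v => mod2pi v.2.1) (measurable_mod2pi.comp (measurable_fst.comp measurable_snd))
    hrotation, show (fun v : ℝ × ℝ × ℝ => mod2pi v.2.1) ∘ X = mod2pi ∘ Ξ from rfl,
    ← Measure.map_map measurable_mod2pi hΞm, hΞ, map_mod2pi_expMeasure_one]

/-- one step of the Markov chain (ζ, θ) ↦ (ζ', θ') with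
θ' = θ + ζ/2 + (ν'+1)α + ζ'/2 (mod 2π) preserves the product measure
TRUNCEXP(1,2π) ⊗ UNI[0,2π). -/
theorem stmt3
    {Ω : Type*} [MeasureSpace Ω] [IsProbabilityMeasure (ℙ : Measure Ω)]
    (Z Θ Ξ A : Ω → ℝ)
    (hZm : Measurable Z) (hΘm : Measurable Θ) (hΞm : Measurable Ξ) (hAm : Measurable A)
    (hindep : iIndepFun ![Z, Θ, Ξ, A] ℙ)
    (hZ : Measure.map Z ℙ = truncExpMeasure (2 * π))
    (hΘ : Measure.map Θ ℙ = uniMeasure)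
    (hΞ : Measure.map Ξ ℙ = ProbabilityTheory.expMeasure 1)
    (hA : Measure.map A ℙ = sinHalfMeasure)
    (ν : Ω → ℤ) (hν : ∀ ω, ν ω = ⌊Ξ ω / (2 * π)⌋)
    (ζ' : Ω → ℝ) (hζ' : ∀ ω, ζ' ω = Ξ ω - 2 * π * (ν ω))
    (θ' : Ω → ℝ)
    (hθ' : ∀ ω, θ' ω = mod2pi (Θ ω + Z ω / 2 + ((ν ω : ℝ) + 1) * A ω + ζ' ω / 2)) :
    Measure.map (fun ω => (ζ' ω, θ' ω)) ℙ = (truncExpMeasure (2 * π)).prod uniMeasure :=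
  stmt3_general Z Θ Ξ A hZm hΘm hΞm hAm hindep hΘ hΞ ν hν ζ' hζ' θ' hθ'
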